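/- arXiv:math/0610583 — 3 statements merged into one kernel-verified Lean document; each statement's English description precedes it below -/
import Mathlib

section
/- If a sequence (a_n) in [0,1] satisfies a_{n+1} ≥ 1 - (1 - a_n^5)^2 for all n, and a_n → 1 as n → ∞, then there exist constants C > 0 and 0 < α < 1 such that a_n ≥ 1 - C·α^{2^n} for all sufficiently large n. -/
/-!
The error `e n = 1 - a n` satisfies `e (n + 1) ≤ (1 - a n ^ 5) ^ 2 ≤ 25 * e n ^ 2` by Bernoulli's
inequality, so `b n = 25 * e n` satisfies `b (n + 1) ≤ b n ^ 2`. Once `b N ≤ 1 / 2`, iterating gives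
`b (N + k) ≤ (1 / 2) ^ 2 ^ k = α ^ 2 ^ (N + k)` for the root `α = (1 / 2) ^ (1 / 2 ^ N)`.
-/

open Filter Topology

theorem sq_one_sub_pow_le {x : ℝ} (hx₀ : 0 ≤ x) (hx₁ : x ≤ 1) (n : ℕ) :
    (1 - x ^ n) ^ 2 ≤ (n * (1 - x)) ^ 2 := by
  have hbernoulli : 1 - x ^ n ≤ n * (1 - x) := by
    linarith [one_add_mul_sub_le_pow (by linarith : -1 ≤ x) n]
  exact pow_le_pow_left₀ (sub_nonneg.2 (pow_le_one₀ hx₀ hx₁)) hbernoulli 2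

theorem le_pow_two_pow_of_le_sq {b : ℕ → ℝ} (h₀ : ∀ n, 0 ≤ b n)
    (hsq : ∀ n, b (n + 1) ≤ b n ^ 2) (N k : ℕ) : b (N + k) ≤ b N ^ 2 ^ k := by
  induction k with
  | zero => simp
  | succ k ih =>
    calc b (N + (k + 1)) ≤ b (N + k) ^ 2 := hsq (N + k)
      _ ≤ (b N ^ 2 ^ k) ^ 2 := pow_le_pow_left₀ (h₀ _) ih 2
      _ = b N ^ 2 ^ (k + 1) := by rw [← pow_mul, pow_succ]

theorem exists_le_pow_two_pow_of_le_sq {b : ℕ → ℝ} (h₀ : ∀ n, 0 ≤ b n)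
    (hsq : ∀ n, b (n + 1) ≤ b n ^ 2) (hlim : Tendsto b atTop (𝓝 0)) :
    ∃ α : ℝ, 0 < α ∧ α < 1 ∧ ∀ᶠ n in atTop, b n ≤ α ^ 2 ^ n := by
  obtain ⟨N, hN⟩ := eventually_atTop.1 (hlim.eventually (eventually_le_nhds one_half_pos))
  set α : ℝ := (1 / 2) ^ (((2 ^ N : ℕ) : ℝ)⁻¹)
  have hαN : α ^ 2 ^ N = 1 / 2 := Real.rpow_inv_natCast_pow (by norm_num) (by positivity)
  refine ⟨α, by positivity, Real.rpow_lt_one (by norm_num) (by norm_num) (by positivity),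
    eventually_atTop.2 ⟨N, fun n hn => ?_⟩⟩
  obtain ⟨k, rfl⟩ := Nat.exists_eq_add_of_le hn
  calc b (N + k) ≤ b N ^ 2 ^ k := le_pow_two_pow_of_le_sq h₀ hsq N k
    _ ≤ (1 / 2) ^ 2 ^ k := pow_le_pow_left₀ (h₀ N) (hN N le_rfl) _
    _ = α ^ 2 ^ (N + k) := by rw [← hαN, ← pow_mul, ← pow_add]

theorem exists_le_mul_pow_two_pow_of_le_mul_sq {e : ℕ → ℝ} {K : ℝ} (hK : 0 < K)
    (h₀ : ∀ n, 0 ≤ e n) (hrec : ∀ n, e (n + 1) ≤ K * e n ^ 2)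
    (hlim : Tendsto e atTop (𝓝 0)) :
    ∃ C > (0 : ℝ), ∃ α : ℝ, 0 < α ∧ α < 1 ∧ ∀ᶠ n in atTop, e n ≤ C * α ^ 2 ^ n := by
  have hsq (n : ℕ) : K * e (n + 1) ≤ (K * e n) ^ 2 := by
    calc K * e (n + 1) ≤ K * (K * e n ^ 2) := mul_le_mul_of_nonneg_left (hrec n) hK.le
      _ = (K * e n) ^ 2 := by ring
  obtain ⟨α, hα₀, hα₁, hα⟩ := exists_le_pow_two_pow_of_le_sq
    (fun n => mul_nonneg hK.le (h₀ n)) hsq (by simpa using hlim.const_mul K)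
  exact ⟨K⁻¹, inv_pos.2 hK, α, hα₀, hα₁, hα.mono fun n hn => (le_inv_mul_iff₀ hK).2 hn⟩

/-- If (a_n) ⊆ [0,1] satisfies a_{n+1} ≥ 1 - (1 - a_n^5)^2 for all n and a_n → 1,
then there are C > 0 and α ∈ (0,1) with a_n ≥ 1 - C·α^(2^n) for all large n. -/
theorem stmt_2 (a : ℕ → ℝ) (ha : ∀ n, a n ∈ Set.Icc (0 : ℝ) 1)
    (hrec : ∀ n, 1 - (1 - a n ^ 5) ^ 2 ≤ a (n + 1))
    (hlim : Tendsto a atTop (nhds 1)) :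
    ∃ C > (0 : ℝ), ∃ α : ℝ, 0 < α ∧ α < 1 ∧
      ∃ N : ℕ, ∀ n, N ≤ n → 1 - C * α ^ 2 ^ n ≤ a n := by
  have herr_rec (n : ℕ) : 1 - a (n + 1) ≤ 25 * (1 - a n) ^ 2 := by
    have h := sq_one_sub_pow_le (ha n).1 (ha n).2 5
    push_cast at h
    linarith [hrec n]
  obtain ⟨C, hC, α, hα₀, hα₁, hbound⟩ := exists_le_mul_pow_two_pow_of_le_mul_sq
    (by norm_num) (fun n => sub_nonneg.2 (ha n).2) herr_rec
    (by simpa using hlim.const_sub 1)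
  obtain ⟨N, hN⟩ := eventually_atTop.1 hbound
  exact ⟨C, hC, α, hα₀, hα₁, N, fun n hn => by linarith [hN n hn]⟩
end

section
/- Let f(t) = 2t - t^2, ε ∈ (0,1) with (1-ε)^2 > 1/2, and let (d_n) be a sequence in [0,1] with d_n > 0 for some n and d_{n+1} ≥ f((1-ε)^2 d_n) for all n ≥ N. Then liminf_{n→∞} d_n ≥ x_ε, where x_ε is the unique positive fixed point of t ↦ f((1-ε)^2 t). -/
/-!
Write `g t = f (a t)` with `a = (1 - ε)²`. On `[0, 1]` the map `g` is increasing and continuous,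
and `g t > t` exactly for `0 < t < x_ε`. Monotonicity makes `[c, 1]` forward invariant for small
`c > 0` with `c < g c`, so `L = liminf d_n` is positive; passing to the limit in
`d_{n+1} ≥ g (d_n)` gives `g L ≤ L`, which forces `L ≥ x_ε`.
-/

open Filter Set

section Dynamics

variable {g : ℝ → ℝ} {d : ℕ → ℝ}

theorem pos_liminf_of_lt_map (hd : ∀ n, d n ∈ Icc (0 : ℝ) 1) (hg : MonotoneOn g (Icc 0 1))
    {x : ℝ} (hx : 0 < x) (hgx : ∀ t ∈ Ioo 0 x, t < g t) {N : ℕ}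
    (hrec : ∀ n, N ≤ n → g (d n) ≤ d (n + 1)) (hpos : 0 < d N) :
    0 < liminf d atTop := by
  set c := min (d N) (x / 2)
  have hc0 : 0 < c := lt_min hpos (half_pos hx)
  have hc1 : c ≤ 1 := (min_le_left _ _).trans (hd N).2
  have hcg : c < g c := hgx c ⟨hc0, (min_le_right _ _).trans_lt (half_lt_self hx)⟩
  have hinv : ∀ n, N ≤ n → c ≤ d n := by
    intro n hn
    induction n, hn using Nat.le_induction with
    | base => exact min_le_left _ _
    | succ n hn ih =>
      exact hcg.le.trans ((hg ⟨hc0.le, hc1⟩ (hd n) ih).trans (hrec n hn))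
  have hcob : IsCoboundedUnder (· ≥ ·) atTop d :=
    (isBoundedUnder_of ⟨1, fun n => (hd n).2⟩).isCoboundedUnder_ge
  exact hc0.trans_le (le_liminf_of_le hcob (eventually_atTop.2 ⟨N, hinv⟩))

theorem map_le_liminf_of_lt_liminf (hd : ∀ n, d n ∈ Icc (0 : ℝ) 1) (hg : MonotoneOn g (Icc 0 1))
    (hrec : ∀ᶠ n in atTop, g (d n) ≤ d (n + 1)) {t : ℝ} (ht0 : 0 ≤ t)
    (ht : t < liminf d atTop) : g t ≤ liminf d atTop := by
  have hcob : IsCoboundedUnder (· ≥ ·) atTop (fun n => d (n + 1)) :=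
    (isBoundedUnder_of ⟨1, fun n => (hd (n + 1)).2⟩).isCoboundedUnder_ge
  rw [← liminf_nat_add d 1]
  refine le_liminf_of_le hcob ?_
  filter_upwards [eventually_lt_of_lt_liminf ht (isBoundedUnder_of ⟨0, fun n => (hd n).1⟩), hrec]
    with n htn hn
  exact (hg ⟨ht0, htn.le.trans (hd n).2⟩ (hd n) htn.le).trans hn

theorem map_liminf_le_liminf (hd : ∀ n, d n ∈ Icc (0 : ℝ) 1) (hg : MonotoneOn g (Icc 0 1))
    (hgc : Continuous g) (hrec : ∀ᶠ n in atTop, g (d n) ≤ d (n + 1))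
    (hL : 0 < liminf d atTop) : g (liminf d atTop) ≤ liminf d atTop :=
  le_of_tendsto (hgc.tendsto _ |>.mono_left nhdsWithin_le_nhds) <| by
    filter_upwards [Ioo_mem_nhdsLT hL] with t ht
    exact map_le_liminf_of_lt_liminf hd hg hrec ht.1.le ht.2

theorem le_liminf_of_lt_map (hd : ∀ n, d n ∈ Icc (0 : ℝ) 1) (hg : MonotoneOn g (Icc 0 1))
    (hgc : Continuous g) {x : ℝ} (hx : 0 < x) (hgx : ∀ t ∈ Ioo 0 x, t < g t) {N : ℕ}
    (hrec : ∀ n, N ≤ n → g (d n) ≤ d (n + 1)) (hpos : 0 < d N) :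
    x ≤ liminf d atTop := by
  have hL := pos_liminf_of_lt_map hd hg hx hgx hrec hpos
  by_contra! hLx
  exact (map_liminf_le_liminf hd hg hgc (eventually_atTop.2 ⟨N, hrec⟩) hL).not_gt
    (hgx _ ⟨hL, hLx⟩)

end Dynamics

section Quadratic

variable {a : ℝ}

theorem monotoneOn_two_mul_sub_sq (ha0 : 0 ≤ a) (ha1 : a ≤ 1) :
    MonotoneOn (fun t => 2 * (a * t) - (a * t) ^ 2) (Icc 0 1) := by
  intro s ⟨hs0, _⟩ t ⟨_, ht1⟩ hst
  have hfac : 0 ≤ 2 - a * (s + t) := by nlinarith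
  nlinarith [mul_nonneg (mul_nonneg ha0 (sub_nonneg.2 hst)) hfac]

theorem lt_two_mul_sub_sq (ha : 0 < a) {t : ℝ} (ht : t ∈ Ioo 0 ((2 * a - 1) / a ^ 2)) :
    t < 2 * (a * t) - (a * t) ^ 2 := by
  have hat : a ^ 2 * t < 2 * a - 1 := by
    have := (lt_div_iff₀ (by positivity)).1 ht.2
    linarith
  nlinarith [mul_lt_mul_of_pos_left hat ht.1]

end Quadratic

/-- With f(t) = 2t - t² and (1-ε)² > 1/2, any sequence (d_n) in [0,1] with
d_N > 0 and d_{n+1} ≥ f((1-ε)²·d_n) for all n ≥ N has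
liminf d_n ≥ x_ε = (2(1-ε)²-1)/(1-ε)⁴, the unique positive fixed point of
t ↦ f((1-ε)²t). -/
theorem stmt_10 (f : ℝ → ℝ) (hf : ∀ t, f t = 2 * t - t ^ 2)
    (ε : ℝ) (hε : ε ∈ Set.Ioo (0 : ℝ) 1) (hsup : 1 / 2 < (1 - ε) ^ 2)
    (d : ℕ → ℝ) (hd : ∀ n, d n ∈ Set.Icc (0 : ℝ) 1) (N : ℕ)
    (hrec : ∀ n, N ≤ n → f ((1 - ε) ^ 2 * d n) ≤ d (n + 1))
    (hpos : 0 < d N) :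
    (2 * (1 - ε) ^ 2 - 1) / (1 - ε) ^ 4 ≤ Filter.liminf d atTop := by
  obtain rfl : f = fun t => 2 * t - t ^ 2 := funext hf
  set a := (1 - ε) ^ 2
  have ha0 : 0 < a := lt_trans (by norm_num) hsup
  have ha1 : a ≤ 1 := by nlinarith [hε.1, hε.2]
  have hx : 0 < (2 * a - 1) / a ^ 2 := div_pos (by linarith) (by positivity)
  rw [show (1 - ε) ^ 4 = a ^ 2 by ring]
  exact le_liminf_of_lt_map hd (monotoneOn_two_mul_sub_sq ha0.le ha1) (by fun_prop) hx
    (fun t ht => lt_two_mul_sub_sq ha0 ht) hrec hpos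
end

section
/- If (a_n) is a sequence in [0,1] with a_n ≥ 1 - C·α^{2^n} for all large n (with C > 0, 0 < α < 1), and (b_n) is another sequence in [0,1] with b_{n+1} ≥ 1 - (1 - b_n)^2 and b_n ≥ a_n^5, then b_n → 1 and moreover 1 - b_n decays at least like a constant times α'^{2^n} for some α' ∈ (0,1). -/
open Filter

/-- If a_n ≥ 1 - C·α^(2^n) for large n, b_{n+1} ≥ 1 - (1-b_n)² and b_n ≥ a_n⁵,
with all terms in [0,1], then b_n → 1 and 1 - b_n ≤ C'·α'^(2^n) eventually for
some C' > 0, α' ∈ (0,1). -/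
theorem stmt_14 (a b : ℕ → ℝ) (C α : ℝ) (hC : 0 < C) (hα0 : 0 < α) (hα1 : α < 1)
    (ha01 : ∀ n, a n ∈ Set.Icc (0 : ℝ) 1) (hb01 : ∀ n, b n ∈ Set.Icc (0 : ℝ) 1)
    (ha : ∃ N₀ : ℕ, ∀ n, N₀ ≤ n → 1 - C * α ^ 2 ^ n ≤ a n)
    (hbrec : ∀ n, 1 - (1 - b n) ^ 2 ≤ b (n + 1))
    (hba : ∀ n, a n ^ 5 ≤ b n) :
    Tendsto b atTop (nhds 1) ∧
    ∃ C' > (0 : ℝ), ∃ α' : ℝ, 0 < α' ∧ α' < 1 ∧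
      ∃ N : ℕ, ∀ n, N ≤ n → 1 - b n ≤ C' * α' ^ 2 ^ n := by
  obtain ⟨N₀, hN₀⟩ := ha
  -- key bound: 1 - b n ≤ 5C α^{2^n} for n ≥ N₀
  have key : ∀ n, N₀ ≤ n → 1 - b n ≤ 5 * C * α ^ 2 ^ n := by
    intro n hn
    have ha0 := (ha01 n).1
    have ha1 := (ha01 n).2
    have h1 : 1 - b n ≤ 1 - a n ^ 5 := by linarith [hba n]
    have h2 : 1 - a n ^ 5 ≤ 5 * (1 - a n) := by nlinarith [sq_nonneg (a n), sq_nonneg (1 - a n), pow_nonneg ha0 3, pow_nonneg ha0 4]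
    have h3 : 1 - a n ≤ C * α ^ 2 ^ n := by linarith [hN₀ n hn]
    nlinarith
  constructor
  · have htend : Tendsto (fun n => 5 * C * α ^ 2 ^ n) atTop (nhds 0) := by
      have h1 : Tendsto (fun k : ℕ => α ^ k) atTop (nhds 0) :=
        tendsto_pow_atTop_nhds_zero_of_lt_one hα0.le hα1
      have h2 : Tendsto (fun n : ℕ => (2:ℕ) ^ n) atTop atTop :=
        tendsto_pow_atTop_atTop_of_one_lt one_lt_two
      have := (h1.comp h2).const_mul (5 * C)
      simpa using this
    have hsq : Tendsto (fun n => 1 - 5 * C * α ^ 2 ^ n) atTop (nhds 1) := by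
      have := htend.const_sub 1
      simpa using this
    refine tendsto_of_tendsto_of_tendsto_of_le_of_le' hsq tendsto_const_nhds ?_ ?_
    · filter_upwards [eventually_atTop.2 ⟨N₀, fun n hn => key n hn⟩] with n h
      linarith
    · filter_upwards with n using (hb01 n).2
  · exact ⟨5 * C, by linarith, α, hα0, hα1, N₀, key⟩
end
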